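/- arXiv:2012.06891 — 2 statements merged into one kernel-verified Lean document; each statement's English description precedes it below -/
import Mathlib

section
/- Fix an integer k ≥ 1 and a rational number q, and set A_{n,k}(q) := Σ_{π ∈ R_{n,k}} q^{F_π}. In the ring of formal power series ℚ[[x]], the generating function Q_k(x;q) := Σ_{n ≥ k} A_{n,k}(q)·xⁿ satisfies Q_k(x;q) = q^k·x^k·(1 − k·x)⁻¹ + Σ_{i=1}^{k-1} i·q^i·x^{k+1}·Π_{j=i}^{k} (1 − j·x)⁻¹. -/
open Finset
open scoped Classical

/-- `π : Fin n → ℕ` is a restricted growth sequence (entries are positive, the first entry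
is `1`, and each entry exceeds the maximum of the previous entries by at most `1`;
equivalently `π₁ = 1` and `π_{j+1} ≤ 1 + max {π₁, …, π_j}`). -/
def IsRGS {n : ℕ} (π : Fin n → ℕ) : Prop :=
  ∀ i : Fin n, 1 ≤ π i ∧ π i ≤ (Finset.univ.filter (fun j : Fin n => j < i)).sup π + 1

/-- The (finite) set `R_n` of restricted growth sequences of length `n`
(all such sequences take values in `{1, …, n}`). -/
noncomputable def RGS (n : ℕ) : Finset (Fin n → ℕ) :=
  (Fintype.piFinset fun _ : Fin n => Finset.Icc 1 n).filter IsRGS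

/-- The (finite) set `R_{n,k}` of restricted growth sequences of length `n`
with maximal letter `k`. -/
noncomputable def RGSk (n k : ℕ) : Finset (Fin n → ℕ) :=
  (RGS n).filter (fun π => Finset.univ.sup π = k)

/-- `F_π`: the number of fixed points of `π`, i.e. (1-indexed) positions `i` with `π_i = i`. -/
def fixCount {n : ℕ} (π : Fin n → ℕ) : ℕ :=
  (Finset.univ.filter (fun i : Fin n => π i = (i : ℕ) + 1)).card

/-!
Deleting the last letter of an RGS of length `n + 1` with maximal letter `k + 1` leaves an RGS
of length `n` whose maximal letter is either `k + 1` (and the deleted letter was any of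
`1, …, k + 1`, never a fixed point since `k + 1 ≤ n`) or `k` (and the deleted letter was `k + 1`,
a fixed point exactly when `k = n`). Hence `A_{n+1,k+1} = (k+1) A_{n,k+1} + q^[k = n] A_{n,k}`,
that is `(1 - (k+1)x) Q_{k+1} = (q^{k+1} - q^k) x^{k+1} + x Q_k` with `Q_0 = 1`. The closed form
satisfies the same recursion, and `1 - (k+1)x` is a unit of `K[[x]]`, so the two agree.
-/
theorem IsRGS.le_succ {n : ℕ} {π : Fin n → ℕ} (h : IsRGS π) (i : Fin n) : π i ≤ i + 1 := by
  induction i using WellFoundedLT.induction with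
  | _ i ih =>
    refine (h i).2.trans (Nat.succ_le_succ (Finset.sup_le fun j hj => ?_))
    have hji : j < i := by simpa using hj
    have := ih j hji
    omega

theorem IsRGS.sup_le {n : ℕ} {π : Fin n → ℕ} (h : IsRGS π) : univ.sup π ≤ n :=
  Finset.sup_le fun i _ => (h.le_succ i).trans i.isLt

theorem mem_RGS {n : ℕ} {π : Fin n → ℕ} : π ∈ RGS n ↔ IsRGS π := by
  refine ⟨fun h => (mem_filter.mp h).2, fun h => mem_filter.mpr ⟨?_, h⟩⟩
  exact Fintype.mem_piFinset.mpr fun i => mem_Icc.mpr ⟨(h i).1, (h.le_succ i).trans i.isLt⟩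

theorem sup_snoc {n : ℕ} (σ : Fin n → ℕ) (v : ℕ) :
    univ.sup (Fin.snoc σ v : Fin (n + 1) → ℕ) = max (univ.sup σ) v := by
  simp [Fin.univ_castSuccEmb, sup_map, Function.comp_def, max_comm]

theorem sup_Iio_castSucc_snoc {n : ℕ} (σ : Fin n → ℕ) (v : ℕ) (i : Fin n) :
    (Iio i.castSucc).sup (Fin.snoc σ v : Fin (n + 1) → ℕ) = (Iio i).sup σ := by
  rw [Fin.Iio_castSucc, sup_map]
  exact sup_congr rfl fun j _ => Fin.snoc_castSucc (α := fun _ => ℕ) ..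

theorem sup_Iio_last_snoc {n : ℕ} (σ : Fin n → ℕ) (v : ℕ) :
    (Iio (Fin.last n)).sup (Fin.snoc σ v : Fin (n + 1) → ℕ) = univ.sup σ := by
  simp [Fin.Iio_last_eq_map, sup_map, Function.comp_def]

theorem isRGS_snoc_iff {n : ℕ} {σ : Fin n → ℕ} {v : ℕ} :
    IsRGS (Fin.snoc σ v : Fin (n + 1) → ℕ) ↔ IsRGS σ ∧ v ∈ Icc 1 (univ.sup σ + 1) := by
  simp only [IsRGS, filter_gt_eq_Iio, Fin.forall_fin_succ', Fin.snoc_castSucc, Fin.snoc_last,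
    sup_Iio_castSucc_snoc, sup_Iio_last_snoc, mem_Icc]

theorem fixCount_snoc {n : ℕ} (σ : Fin n → ℕ) (v : ℕ) :
    fixCount (Fin.snoc σ v : Fin (n + 1) → ℕ) = fixCount σ + if v = n + 1 then 1 else 0 := by
  simp only [fixCount, card_filter, Fin.sum_univ_castSucc, Fin.snoc_castSucc, Fin.snoc_last,
    Fin.val_castSucc, Fin.val_last]

theorem sum_RGS_succ {M : Type*} [AddCommMonoid M] {n : ℕ} (g : (Fin (n + 1) → ℕ) → M) :
    ∑ π ∈ RGS (n + 1), g π =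
      ∑ σ ∈ RGS n, ∑ v ∈ Icc 1 (univ.sup σ + 1), g (Fin.snoc σ v) := by
  rw [← sum_sigma (RGS n) (fun σ => Icc 1 (univ.sup σ + 1)) (fun p => g (Fin.snoc p.1 p.2))]
  refine sum_bij' (fun π _ => ⟨Fin.init π, π (Fin.last n)⟩) (fun p _ => Fin.snoc p.1 p.2)
    ?_ ?_ ?_ ?_ ?_
  · intro π hπ
    rw [← Fin.snoc_init_self π, mem_RGS, isRGS_snoc_iff] at hπ
    exact mem_sigma.mpr ⟨mem_RGS.mpr hπ.1, hπ.2⟩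
  · rintro ⟨σ, v⟩ h
    exact mem_RGS.mpr (isRGS_snoc_iff.mpr (by simpa [mem_RGS] using h))
  · intro π _
    exact Fin.snoc_init_self π
  · rintro ⟨σ, v⟩ _
    simp
  · intro π _
    rw [Fin.snoc_init_self]

section FixedPointSum

variable {R : Type*} [CommSemiring R]

noncomputable def fixedPointSum (q : R) (n k : ℕ) : R :=
  ∑ π ∈ RGSk n k, q ^ fixCount π

theorem fixedPointSum_eq_sum_RGS (q : R) (n k : ℕ) :
    fixedPointSum q n k = ∑ π ∈ RGS n, if univ.sup π = k then q ^ fixCount π else 0 :=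
  sum_filter _ _

theorem fixedPointSum_eq_zero_of_lt (q : R) {n k : ℕ} (h : n < k) : fixedPointSum q n k = 0 :=
  sum_eq_zero fun π hπ => by
    obtain ⟨hπ, hsup⟩ := mem_filter.mp hπ
    exact absurd ((mem_RGS.mp hπ).sup_le) (by omega)

theorem fixedPointSum_zero_zero (q : R) : fixedPointSum q 0 0 = 1 := by
  simp [fixedPointSum, RGSk, RGS, fixCount, filter_singleton, IsRGS]

theorem fixedPointSum_succ_zero (q : R) (n : ℕ) : fixedPointSum q (n + 1) 0 = 0 :=
  sum_eq_zero fun π hπ => by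
    obtain ⟨hπ, hsup⟩ := mem_filter.mp hπ
    have := ((mem_RGS.mp hπ) 0).1.trans (le_sup (mem_univ 0))
    omega

theorem fixedPointSum_succ_succ (q : R) (n k : ℕ) :
    fixedPointSum q (n + 1) (k + 1) =
      (k + 1) * fixedPointSum q n (k + 1) + (if k = n then q else 1) * fixedPointSum q n k := by
  simp only [fixedPointSum_eq_sum_RGS, sum_RGS_succ, mul_sum, ← sum_add_distrib]
  refine sum_congr rfl fun σ hσ => ?_
  have hs := (mem_RGS.mp hσ).sup_le
  set s := univ.sup σ
  simp only [sup_snoc, fixCount_snoc, pow_add, pow_ite, pow_one, pow_zero]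
  have hlow : ∀ v ∈ Icc 1 s, (if max s v = k + 1 then
      q ^ fixCount σ * (if v = n + 1 then q else 1) else 0) =
        if s = k + 1 then q ^ fixCount σ else 0 := by
    intro v hv
    rw [mem_Icc] at hv
    rw [max_eq_left hv.2, if_neg (show v ≠ n + 1 by omega), mul_one]
  rw [sum_Icc_succ_top (by omega), sum_congr rfl hlow, sum_const, Nat.card_Icc,
    max_eq_right (Nat.le_succ s)]
  by_cases hk : s = k
  · simp [hk, mul_comm]
  · by_cases hk' : s = k + 1 <;> simp [hk, hk', nsmul_eq_mul]

theorem fixedPointSum_self (q : R) (n : ℕ) : fixedPointSum q n n = q ^ n := by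
  induction n with
  | zero => exact (fixedPointSum_zero_zero q).trans (pow_zero q).symm
  | succ n ih =>
    rw [fixedPointSum_succ_succ, fixedPointSum_eq_zero_of_lt q n.lt_succ_self, if_pos rfl, ih,
      mul_zero, zero_add, pow_succ']

end FixedPointSum

theorem sum_Ico_one_succ_top {M : Type*} [AddCommMonoid M] {f : ℕ → M} (hf : f 0 = 0) (k : ℕ) :
    ∑ i ∈ Ico 1 (k + 1), f i = ∑ i ∈ Ico 1 k, f i + f k := by
  rcases k with _ | k
  · simp [hf]
  · exact sum_Ico_succ_top (by omega) f

section GeneratingFunction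

open PowerSeries

variable {K : Type*} [Field K]

noncomputable def fixedPointOGF (q : K) (k : ℕ) : PowerSeries K :=
  mk fun n => fixedPointSum q n k

noncomputable def fixedPointOGFClosedForm (q : K) (k : ℕ) : PowerSeries K :=
  C (q ^ k) * X ^ k * (1 - C (k : K) * X)⁻¹ +
    ∑ i ∈ Ico 1 k, C ((i : K) * q ^ i) * X ^ (k + 1) * ∏ j ∈ Icc i k, (1 - C (j : K) * X)⁻¹

theorem one_sub_C_mul_X_mul_inv (a : K) : (1 - C a * X) * (1 - C a * X)⁻¹ = 1 :=
  PowerSeries.mul_inv_cancel _ (by simp)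

theorem one_sub_C_mul_X_ne_zero (a : K) : 1 - C a * X ≠ 0 :=
  ne_zero_of_map (f := constantCoeff) (by simp)

theorem fixedPointOGF_zero (q : K) : fixedPointOGF q 0 = 1 := by
  ext (_ | n) <;> simp [fixedPointOGF, fixedPointSum_zero_zero, fixedPointSum_succ_zero, coeff_one]

theorem one_sub_C_mul_X_mul_fixedPointOGF_succ (q : K) (k : ℕ) :
    (1 - C ((k + 1 : ℕ) : K) * X) * fixedPointOGF q (k + 1) =
      C (q ^ (k + 1) - q ^ k) * X ^ (k + 1) + X * fixedPointOGF q k := by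
  ext (_ | m)
  · simp [fixedPointOGF, fixedPointSum_eq_zero_of_lt]
  · rw [sub_mul, one_mul, mul_assoc, map_sub, coeff_C_mul, coeff_succ_X_mul, map_add,
      coeff_C_mul, coeff_X_pow, coeff_succ_X_mul]
    simp only [fixedPointOGF, coeff_mk, fixedPointSum_succ_succ]
    by_cases h : m = k
    · subst h
      simp [fixedPointSum_self, fixedPointSum_eq_zero_of_lt, pow_succ']
    · simp [h, Ne.symm h]

theorem fixedPointOGFClosedForm_zero (q : K) : fixedPointOGFClosedForm q 0 = 1 := by
  simp [fixedPointOGFClosedForm]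

theorem one_sub_C_mul_X_mul_fixedPointOGFClosedForm_succ (q : K) (k : ℕ) :
    (1 - C ((k + 1 : ℕ) : K) * X) * fixedPointOGFClosedForm q (k + 1) =
      C (q ^ (k + 1) - q ^ k) * X ^ (k + 1) + X * fixedPointOGFClosedForm q k := by
  set u : ℕ → PowerSeries K := fun j => 1 - C (j : K) * X
  have huk : u k = 1 - C (k : K) * X := rfl
  have hu (j : ℕ) : u j * (u j)⁻¹ = 1 := one_sub_C_mul_X_mul_inv _
  have hsum : u (k + 1) * ∑ i ∈ Ico 1 (k + 1),
      C ((i : K) * q ^ i) * X ^ (k + 1 + 1) * ∏ j ∈ Icc i (k + 1), (u j)⁻¹ =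
        X * ∑ i ∈ Ico 1 (k + 1), C ((i : K) * q ^ i) * X ^ (k + 1) * ∏ j ∈ Icc i k, (u j)⁻¹ := by
    rw [mul_sum, mul_sum]
    refine sum_congr rfl fun i hi => ?_
    rw [prod_Icc_succ_top (by simp at hi; omega)]
    linear_combination
      (X * C ((i : K) * q ^ i) * X ^ (k + 1) * ∏ j ∈ Icc i k, (u j)⁻¹) * hu (k + 1)
  change u (k + 1) * (C (q ^ (k + 1)) * X ^ (k + 1) * (u (k + 1))⁻¹ + _) =
    _ + X * (C (q ^ k) * X ^ k * (u k)⁻¹ + _)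
  rw [mul_add, hsum, sum_Ico_one_succ_top (by simp), Icc_self, prod_singleton, mul_add]
  simp only [map_sub, map_mul]
  linear_combination C (q ^ (k + 1)) * X ^ (k + 1) * hu (k + 1) - C (q ^ k) * X ^ (k + 1) * hu k
    + C (q ^ k) * X ^ (k + 1) * (u k)⁻¹ * huk

theorem fixedPointOGF_eq_closedForm (q : K) (k : ℕ) :
    fixedPointOGF q k = fixedPointOGFClosedForm q k := by
  induction k with
  | zero => rw [fixedPointOGF_zero, fixedPointOGFClosedForm_zero]
  | succ k ih =>
    refine mul_left_cancel₀ (one_sub_C_mul_X_ne_zero ((k + 1 : ℕ) : K)) ?_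
    rw [one_sub_C_mul_X_mul_fixedPointOGF_succ, one_sub_C_mul_X_mul_fixedPointOGFClosedForm_succ,
      ih]

end GeneratingFunction

theorem rgs_fixpoint_ogf_closed_form_general (k : ℕ) (q : ℚ) :
    (PowerSeries.mk fun n => if k ≤ n then ∑ π ∈ RGSk n k, q ^ fixCount π else 0)
      = PowerSeries.C (q ^ k) * PowerSeries.X ^ k
          * (1 - PowerSeries.C (k : ℚ) * PowerSeries.X)⁻¹
        + ∑ i ∈ Finset.Ico 1 k,
            PowerSeries.C ((i : ℚ) * q ^ i) * PowerSeries.X ^ (k + 1)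
              * ∏ j ∈ Finset.Icc i k, (1 - PowerSeries.C (j : ℚ) * PowerSeries.X)⁻¹ := by
  have htrunc : (PowerSeries.mk fun n => if k ≤ n then ∑ π ∈ RGSk n k, q ^ fixCount π else 0) =
      fixedPointOGF q k := by
    ext n
    rw [fixedPointOGF, PowerSeries.coeff_mk, PowerSeries.coeff_mk]
    split_ifs with h
    · rfl
    · exact (fixedPointSum_eq_zero_of_lt q (not_le.mp h)).symm
  rw [htrunc, fixedPointOGF_eq_closedForm]
  rfl

/-- Closed form for the ordinary generating function
`Q_k(x;q) = Σ_{n ≥ k} A_{n,k}(q) xⁿ` in `ℚ[[x]]`. -/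
theorem rgs_fixpoint_ogf_closed_form (k : ℕ) (hk : 1 ≤ k) (q : ℚ) :
    (PowerSeries.mk fun n => if k ≤ n then ∑ π ∈ RGSk n k, q ^ fixCount π else 0)
      = PowerSeries.C (q ^ k) * PowerSeries.X ^ k
          * (1 - PowerSeries.C (k : ℚ) * PowerSeries.X)⁻¹
        + ∑ i ∈ Finset.Ico 1 k,
            PowerSeries.C ((i : ℚ) * q ^ i) * PowerSeries.X ^ (k + 1)
              * ∏ j ∈ Finset.Icc i k, (1 - PowerSeries.C (j : ℚ) * PowerSeries.X)⁻¹ :=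
  rgs_fixpoint_ogf_closed_form_general k q
end

section
/- For every integer n ≥ 2, the number of restricted growth sequences of length n having exactly one fixed point equals B_{n−1}; that is, |{π ∈ R_n : F_π = 1}| = |R_{n−1}|. -/
open Finset
open scoped Classical

/-- Values of an RGS satisfy `π i ≤ i + 1` (0-indexed). -/
lemma isRGS_le {n : ℕ} {π : Fin n → ℕ} (h : IsRGS π) (i : Fin n) : π i ≤ (i : ℕ) + 1 := by
  suffices H : ∀ k : ℕ, ∀ i : Fin n, (i : ℕ) < k → π i ≤ (i : ℕ) + 1 from
    H ((i : ℕ) + 1) i (Nat.lt_succ_self _)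
  intro k
  induction k with
  | zero => intro i hi; omega
  | succ k ih =>
    intro i hi
    rcases Nat.lt_or_ge (i : ℕ) k with hk | hk
    · exact ih i hk
    · have h2 := (h i).2
      have hsup : (Finset.univ.filter (fun j : Fin n => j < i)).sup π ≤ (i : ℕ) := by
        apply Finset.sup_le
        intro j hj
        simp only [Finset.mem_filter, Finset.mem_univ, true_and] at hj
        have hji : (j : ℕ) < (i : ℕ) := hj
        have := ih j (by omega)
        omega
      omega

lemma isRGS_head {n : ℕ} {π : Fin n → ℕ} (h : IsRGS π) (i : Fin n) (hi : (i : ℕ) = 0) :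
    π i = 1 := by
  have h1 := (h i).1
  have h2 := (h i).2
  have he : (Finset.univ.filter (fun j : Fin n => j < i)) = ∅ := by
    apply Finset.filter_false_of_mem
    intro j _ hj
    have : (j : ℕ) < (i : ℕ) := hj
    omega
  rw [he] at h2
  simp only [Finset.sup_empty, bot_eq_zero, zero_add] at h2
  omega

lemma mem_RGS_iff {n : ℕ} (π : Fin n → ℕ) : π ∈ RGS n ↔ IsRGS π := by
  constructor
  · intro h; exact (Finset.mem_filter.mp h).2
  · intro h
    refine Finset.mem_filter.mpr ⟨?_, h⟩
    rw [Fintype.mem_piFinset]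
    intro i
    rw [Finset.mem_Icc]
    have h1 := (h i).1
    have h2 := isRGS_le h i
    have h3 : (i : ℕ) < n := i.isLt
    omega

lemma fixCount_eq_one_iff {n : ℕ} (hn : 1 ≤ n) {π : Fin n → ℕ} (h : IsRGS π) :
    fixCount π = 1 ↔ ∀ i : Fin n, (i : ℕ) ≠ 0 → π i ≠ (i : ℕ) + 1 := by
  have hz : π ⟨0, by omega⟩ = ((⟨0, by omega⟩ : Fin n) : ℕ) + 1 := by
    simpa using isRGS_head h ⟨0, by omega⟩ rfl
  constructor
  · intro hc i hi0 hpi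
    rw [fixCount, Finset.card_eq_one] at hc
    obtain ⟨a, ha⟩ := hc
    have h0m : (⟨0, by omega⟩ : Fin n) ∈ ({a} : Finset (Fin n)) := by
      rw [← ha]; simp [hz]
    have him : i ∈ ({a} : Finset (Fin n)) := by
      rw [← ha]; simp [hpi]
    simp only [Finset.mem_singleton] at h0m him
    apply hi0
    rw [him, ← h0m]
  · intro hns
    have hset : Finset.univ.filter (fun i : Fin n => π i = (i : ℕ) + 1)
        = {(⟨0, by omega⟩ : Fin n)} := by
      ext i
      simp only [Finset.mem_filter, Finset.mem_univ, true_and, Finset.mem_singleton]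
      constructor
      · intro hpi
        by_contra hne
        have hi0 : (i : ℕ) ≠ 0 := fun h0 => hne (Fin.ext h0)
        exact hns i hi0 hpi
      · intro hi; subst hi; exact hz
    rw [fixCount, hset, Finset.card_singleton]

lemma rgs_key (m : ℕ) (hm : 1 ≤ m) :
    ((RGS (m + 1)).filter (fun π => fixCount π = 1)).card = (RGS m).card := by
  classical
  refine Finset.card_nbij'
    (fun σ => fun j : Fin m => σ j.succ)
    (fun τ => fun i : Fin (m + 1) => Fin.cases 1 (fun j => τ j) i)
    ?_ ?_ ?_ ?_
  · -- forward maps into RGS m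
    intro σ hσ
    rw [Finset.mem_coe, Finset.mem_filter] at hσ
    obtain ⟨hσR, hfix⟩ := hσ
    have hrgs : IsRGS σ := (mem_RGS_iff σ).mp hσR
    have hnofix := (fixCount_eq_one_iff (by omega) hrgs).mp hfix
    rw [Finset.mem_coe, mem_RGS_iff]
    intro j
    beta_reduce
    refine ⟨(hrgs j.succ).1, ?_⟩
    rcases Nat.eq_zero_or_pos (j : ℕ) with hj0 | hjpos
    · -- σ at position 1 equals 1 since position 1 is not a fixed point
      have hval : (j.succ : ℕ) = 1 := by simp [hj0]
      have hsub : (Finset.univ.filter (fun i : Fin (m + 1) => i < j.succ)).sup σ ≤ 1 := by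
        apply Finset.sup_le
        intro i hi
        simp only [Finset.mem_filter, Finset.mem_univ, true_and] at hi
        have hiv : (i : ℕ) < (j.succ : ℕ) := hi
        have hi0 : (i : ℕ) = 0 := by omega
        exact le_of_eq (isRGS_head hrgs i hi0)
      have h2 := (hrgs j.succ).2
      have hne : σ j.succ ≠ (j.succ : ℕ) + 1 := hnofix j.succ (by omega)
      have hpos := (hrgs j.succ).1
      have h1 : σ j.succ = 1 := by omega
      rw [h1]
      exact Nat.le_add_left 1 _
    · have h2 := (hrgs j.succ).2
      refine le_trans h2 (Nat.add_le_add_right ?_ 1)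
      apply Finset.sup_le
      intro i hi
      simp only [Finset.mem_filter, Finset.mem_univ, true_and] at hi
      have hiv : (i : ℕ) < (j.succ : ℕ) := hi
      induction i using Fin.cases with
      | zero =>
        have h0 : σ 0 = 1 := isRGS_head hrgs 0 rfl
        rw [h0]
        have hk0 : (⟨0, by omega⟩ : Fin m) ∈
            Finset.univ.filter (fun k : Fin m => k < j) := by
          simp only [Finset.mem_filter, Finset.mem_univ, true_and]
          exact show (0 : ℕ) < (j : ℕ) from hjpos
        refine le_trans ?_ (Finset.le_sup hk0)
        exact (hrgs _).1
      | succ k =>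
        have hkj : k ∈ Finset.univ.filter (fun k : Fin m => k < j) := by
          simp only [Finset.mem_filter, Finset.mem_univ, true_and]
          have : (k : ℕ) + 1 < (j : ℕ) + 1 := by simpa using hiv
          exact show (k : ℕ) < (j : ℕ) by omega
        exact Finset.le_sup (f := fun k : Fin m => σ k.succ) hkj
  · -- backward maps into the filtered set
    intro τ hτ
    beta_reduce
    have hrgs : IsRGS τ := (mem_RGS_iff τ).mp hτ
    set σ : Fin (m + 1) → ℕ := fun i : Fin (m + 1) => Fin.cases 1 (fun j => τ j) i with hσdef
    have hσ0 : σ 0 = 1 := rfl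
    have hσs : ∀ j : Fin m, σ j.succ = τ j := fun j => by simp [hσdef]
    have hσrgs : IsRGS σ := by
      intro i
      induction i using Fin.cases with
      | zero =>
        rw [hσ0]
        exact ⟨le_refl 1, Nat.le_add_left 1 _⟩
      | succ k =>
        rw [hσs k]
        refine ⟨(hrgs k).1, le_trans (hrgs k).2 (Nat.add_le_add_right ?_ 1)⟩
        apply Finset.sup_le
        intro k' hk'
        simp only [Finset.mem_filter, Finset.mem_univ, true_and] at hk'
        have hkv : (k' : ℕ) < (k : ℕ) := hk'
        have hmem : k'.succ ∈ Finset.univ.filter (fun i : Fin (m + 1) => i < k.succ) := by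
          simp only [Finset.mem_filter, Finset.mem_univ, true_and]
          exact show ((k' : ℕ) + 1 : ℕ) < (k : ℕ) + 1 by simpa using Nat.succ_lt_succ hkv
        refine le_trans ?_ (Finset.le_sup hmem)
        rw [hσs k']
    rw [Finset.mem_coe, Finset.mem_filter]
    refine ⟨(mem_RGS_iff σ).mpr hσrgs, ?_⟩
    rw [fixCount_eq_one_iff (by omega) hσrgs]
    intro i hi0 hpi
    induction i using Fin.cases with
    | zero => exact hi0 rfl
    | succ k =>
      rw [hσs k] at hpi
      have hle := isRGS_le hrgs k
      have : (k.succ : ℕ) = (k : ℕ) + 1 := by simp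
      omega
  · -- left inverse
    intro σ hσ
    rw [Finset.mem_coe, Finset.mem_filter] at hσ
    have hrgs : IsRGS σ := (mem_RGS_iff σ).mp hσ.1
    funext i
    induction i using Fin.cases with
    | zero =>
      beta_reduce
      rw [Fin.cases_zero]
      exact (isRGS_head hrgs 0 rfl).symm
    | succ k =>
      beta_reduce
      rw [Fin.cases_succ]
  · -- right inverse
    intro τ hτ
    funext j
    beta_reduce
    rw [Fin.cases_succ]

/-- For `n ≥ 2`, the number of RGS of length `n` with exactly one fixed
point equals `B_{n-1} = |R_{n-1}|`. -/
theorem rgs_count_one_fixed_point (n : ℕ) (hn : 2 ≤ n) :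
    ((RGS n).filter (fun π => fixCount π = 1)).card = (RGS (n - 1)).card := by
  obtain ⟨m, rfl⟩ : ∃ m, n = m + 1 := ⟨n - 1, by omega⟩
  exact rgs_key m (by omega)
end
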